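/- Let K be a compact metric space and suppose that C(K) is almost isometrically universal for separable Banach spaces: for every separable real Banach space X and every ε > 0 there exists a map f : X → C(K) with ‖x − y‖ ≤ ‖f(x) − f(y)‖_∞ ≤ (1+ε)·‖x − y‖ for all x, y ∈ X. Then the intersection ⋂_{n∈ℕ} K^(n) of all finite iterated derived sets of K is nonempty. -/
import Mathlib


/-- The `n`-th iterated derived set of a topological space `K`, taken inside `K`:
`K^(0) = K` and `K^(n+1)` is the set of accumulation points of `K^(n)` in `K`. -/
def iteratedDerivedSet (K : Type*) [TopologicalSpace K] : ℕ → Set K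
  | 0 => Set.univ
  | n + 1 => derivedSet (iteratedDerivedSet K n)

open scoped symmDiff ENNReal

noncomputable section
namespace AIUnivAux

abbrev ℓ₁ : Type := lp (fun _ : ℕ => ℝ) 1

def cube (S : Finset ℕ) : ℓ₁ := ∑ i ∈ S, lp.single 1 i (1:ℝ)

lemma toReal_one_pos : (0:ℝ) < (1:ℝ≥0∞).toReal := by simp

lemma norm_sum_single_one (S : Finset ℕ) (g : ℕ → ℝ) :
    ‖∑ i ∈ S, lp.single 1 i (g i)‖ = ∑ i ∈ S, |g i| := by
  have h := lp.norm_sum_single (E := fun _ : ℕ => ℝ) toReal_one_pos g S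
  simpa [Real.norm_eq_abs] using h

lemma sum_single_apply (S : Finset ℕ) (g : ℕ → ℝ) (j : ℕ) :
    (↑(∑ i ∈ S, lp.single 1 i (g i)) : ℕ → ℝ) j = if j ∈ S then g j else 0 := by
  rw [lp.coeFn_sum]
  simp only [Finset.sum_apply]
  have hc : ∀ i ∈ S, (lp.single (E := fun _ : ℕ => ℝ) 1 i (g i)) j
      = if j = i then g i else 0 := by
    intro i _
    rw [lp.single_apply]
    by_cases hij : j = i
    · subst hij; simp
    · simp [hij]
  rw [Finset.sum_congr rfl hc]
  by_cases hj : j ∈ S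
  · rw [Finset.sum_eq_single_of_mem j hj (fun i _ hne => if_neg (Ne.symm hne))]
    simp [hj]
  · rw [if_neg hj]
    apply Finset.sum_eq_zero
    intro i hi
    exact if_neg (fun hh : j = i => hj (hh ▸ hi))

lemma cube_sub (P Q : Finset ℕ) :
    cube P - cube Q = ∑ i ∈ P ∆ Q, lp.single 1 i (if i ∈ P then (1:ℝ) else -1) := by
  apply lp.ext
  funext j
  have h1 := sum_single_apply P (fun _ => (1:ℝ)) j
  have h2 := sum_single_apply Q (fun _ => (1:ℝ)) j
  have h3 := sum_single_apply (P ∆ Q) (fun i => if i ∈ P then (1:ℝ) else -1) j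
  have hsub : (↑(cube P - cube Q) : ℕ → ℝ) j = (↑(cube P) : ℕ → ℝ) j - (↑(cube Q) : ℕ → ℝ) j := by
    rw [lp.coeFn_sub]; rfl
  rw [hsub]
  unfold cube
  rw [h1, h2, h3]
  by_cases hP : j ∈ P <;> by_cases hQ : j ∈ Q <;> simp [Finset.mem_symmDiff, hP, hQ]

lemma norm_cube_sub (P Q : Finset ℕ) :
    ‖cube P - cube Q‖ = ((P ∆ Q).card : ℝ) := by
  rw [cube_sub, norm_sum_single_one]
  have : ∀ i ∈ P ∆ Q, |if i ∈ P then (1:ℝ) else -1| = 1 := by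
    intro i _
    split <;> simp
  rw [Finset.sum_congr rfl this]
  simp

instance : TopologicalSpace.SeparableSpace ℓ₁ := by
  refine ⟨⟨⋃ (F : Finset ℕ), Set.range
      (fun ψ : ((↥F) → ℚ) => ∑ i ∈ F.attach, lp.single 1 (i:ℕ) ((ψ i : ℝ))), ?_, ?_⟩⟩
  · exact Set.countable_iUnion (fun F => Set.countable_range _)
  · rw [Metric.dense_iff]
    intro f r hr
    have hs := lp.hasSum_single (E := fun _ : ℕ => ℝ) (p := 1) (by simp) f
    rw [HasSum] at hs
    obtain ⟨F, hF⟩ := (Metric.tendsto_nhds.mp hs (r/2) (by linarith)).exists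
    have hcpos : (0:ℝ) < r/(2*(F.card+1)) := by positivity
    choose q hq using fun i : ℕ => exists_rat_near (f i) hcpos
    refine ⟨∑ i ∈ F.attach, lp.single 1 (i:ℕ) ((q i : ℝ)), Metric.mem_ball'.mpr ?_,
      Set.mem_iUnion.mpr ⟨F, Set.mem_range.mpr ⟨fun i => q (i:ℕ), rfl⟩⟩⟩
    rw [show (∑ i ∈ F.attach, lp.single (E := fun _ : ℕ => ℝ) 1 (i:ℕ) ((q (i:ℕ) : ℝ)))
        = ∑ i ∈ F, lp.single 1 i ((q i : ℝ)) from
      Finset.sum_attach F (fun i => lp.single (E := fun _ : ℕ => ℝ) 1 i ((q i : ℝ)))]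
    have hd2 : dist (∑ i ∈ F, lp.single (E := fun _ : ℕ => ℝ) 1 i (f i))
        (∑ i ∈ F, lp.single 1 i ((q i : ℝ))) < r/2 := by
      rw [dist_eq_norm, ← Finset.sum_sub_distrib]
      have hsing : ∀ i ∈ F, lp.single (E := fun _ : ℕ => ℝ) 1 i (f i) - lp.single 1 i ((q i : ℝ))
          = lp.single 1 i (f i - (q i : ℝ)) := by
        intro i _
        apply lp.ext
        funext j
        simp only [lp.coeFn_sub, Pi.sub_apply]
        by_cases hij : j = i
        · subst hij; simp [lp.single_apply_self]
        · simp [lp.single_apply_ne _ _ _ hij]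
      rw [Finset.sum_congr rfl hsing]
      have hnorm : ‖∑ i ∈ F, lp.single (E := fun _ : ℕ => ℝ) 1 i (f i - (q i : ℝ))‖
          = ∑ i ∈ F, |f i - (q i : ℝ)| := by
        have h := lp.norm_sum_single (E := fun _ : ℕ => ℝ) (p := 1) (by simp)
          (fun i => f i - (q i : ℝ)) F
        simpa [Real.norm_eq_abs] using h
      rw [hnorm]
      have hsum : ∑ i ∈ F, |f i - (q i : ℝ)| ≤ (F.card : ℝ) * (r / (2 * (F.card + 1))) := by
        have := Finset.sum_le_card_nsmul F (fun i => |f i - (q i : ℝ)|) (r / (2 * (F.card + 1)))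
          (fun i _ => (hq i).le)
        simpa [nsmul_eq_mul] using this
      have hlt : (F.card : ℝ) * (r / (2 * (F.card + 1))) < r / 2 := by
        rw [mul_div_assoc']
        rw [div_lt_div_iff₀ (by positivity) (by norm_num : (0:ℝ) < 2)]
        nlinarith [hr]
      linarith
    calc dist f (∑ i ∈ F, lp.single 1 i ((q i : ℝ)))
        ≤ dist f (∑ i ∈ F, lp.single 1 i (f i))
          + dist (∑ i ∈ F, lp.single 1 i (f i)) (∑ i ∈ F, lp.single 1 i ((q i : ℝ))) :=
          dist_triangle _ _ _
      _ < r/2 + r/2 := by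
          refine add_lt_add ?_ hd2
          rw [dist_comm] at hF; exact hF
      _ = r := by ring



lemma block_inj {d j k r s : ℕ} (hr : r < d) (hs : s < d) (h : j*d + r = k*d + s) : j = k := by
  rcases lt_trichotomy j k with hlt | he | hgt
  · exfalso
    have h1 : j*d + r < (j+1)*d := by nlinarith
    have h2 : (j+1)*d ≤ k*d := Nat.mul_le_mul_right d hlt
    omega
  · exact he
  · exfalso
    have h1 : k*d + s < (k+1)*d := by nlinarith
    have h2 : (k+1)*d ≤ j*d := Nat.mul_le_mul_right d hgt
    omega

lemma symmDiff_union_self {A X : Finset ℕ} (hd : Disjoint X A) : (A ∪ X) ∆ A = X := by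
  ext a
  have : a ∈ X → a ∉ A := fun h => Finset.disjoint_left.mp hd h
  simp only [Finset.mem_symmDiff, Finset.mem_union]
  tauto

lemma symmDiff_union_union {P Q Xj Xk : Finset ℕ} (hjP : Disjoint Xj (P ∪ Q))
    (hkP : Disjoint Xk (P ∪ Q)) (hjk : Disjoint Xj Xk) :
    (P ∪ Xj) ∆ (Q ∪ Xk) = (P ∆ Q) ∪ Xj ∪ Xk := by
  ext a
  have h1 : a ∈ Xj → a ∉ P ∪ Q := fun h => Finset.disjoint_left.mp hjP h
  have h2 : a ∈ Xk → a ∉ P ∪ Q := fun h => Finset.disjoint_left.mp hkP h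
  have h3 : a ∈ Xj → a ∉ Xk := fun h => Finset.disjoint_left.mp hjk h
  simp only [Finset.mem_symmDiff, Finset.mem_union] at *
  tauto

lemma symmDiff_base_strip {P Q Xj : Finset ℕ} (hjP : Disjoint Xj (P ∪ Q)) :
    (P ∪ Xj) ∆ ((P ∩ Q) ∪ Xj) = P \ Q := by
  ext a
  have h1 : a ∈ Xj → a ∉ P ∪ Q := fun h => Finset.disjoint_left.mp hjP h
  simp only [Finset.mem_symmDiff, Finset.mem_union, Finset.mem_inter, Finset.mem_sdiff] at *
  tauto

lemma card_symmDiff_split (P Q : Finset ℕ) : (P \ Q).card + (Q \ P).card = (P ∆ Q).card := by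
  rw [symmDiff_def]
  exact (Finset.card_union_of_disjoint disjoint_sdiff_sdiff).symm

lemma card_symmDiff_union_union {P Q Xj Xk : Finset ℕ} (hjP : Disjoint Xj (P ∪ Q))
    (hkP : Disjoint Xk (P ∪ Q)) (hjk : Disjoint Xj Xk) :
    ((P ∪ Xj) ∆ (Q ∪ Xk)).card = (P ∆ Q).card + Xj.card + Xk.card := by
  rw [symmDiff_union_union hjP hkP hjk]
  have hΔ : (P ∆ Q) ⊆ P ∪ Q := by
    intro a ha
    simp only [Finset.mem_symmDiff] at ha
    simp only [Finset.mem_union]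
    tauto
  have d1 : Disjoint (P ∆ Q) Xj := (Finset.disjoint_of_subset_left hΔ hjP.symm)
  have d2 : Disjoint ((P ∆ Q) ∪ Xj) Xk := by
    rw [Finset.disjoint_union_left]
    exact ⟨Finset.disjoint_of_subset_left hΔ hkP.symm, hjk⟩
  rw [Finset.card_union_of_disjoint d2, Finset.card_union_of_disjoint d1]

variable {K : Type*} [MetricSpace K] [CompactSpace K]

def dIter (F : Set K) : ℕ → Set K
  | 0 => F
  | n+1 => derivedSet (dIter F n)

lemma dIter_succ_shift (F : Set K) (n : ℕ) : dIter F (n+1) = dIter (derivedSet F) n := by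
  induction n with
  | zero => rfl
  | succ n ih =>
      show derivedSet (dIter F (n+1)) = derivedSet (dIter (derivedSet F) n)
      rw [ih]

lemma finite_of_disjoint_derivedSet {S F : Set K} (hS : IsClosed S)
    (hdisj : S ∩ derivedSet F = ∅) (hSF : S ⊆ F) : S.Finite := by
  have key : ∀ t ∈ S, ∃ V : Set K, IsOpen V ∧ t ∈ V ∧ V ∩ F ⊆ {t} := by
    intro t ht
    have hnd : t ∉ derivedSet F := fun hd =>
      (Set.eq_empty_iff_forall_notMem.mp hdisj t) ⟨ht, hd⟩
    rw [mem_derivedSet, accPt_iff_nhds] at hnd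
    push_neg at hnd
    obtain ⟨U, hU, hUF⟩ := hnd
    obtain ⟨V, hVU, hVopen, htV⟩ := mem_nhds_iff.mp hU
    exact ⟨V, hVopen, htV, fun x ⟨hxV, hxF⟩ => hUF x ⟨hVU hxV, hxF⟩⟩
  choose! V hVopen htV hVF using key
  have hcover : S ⊆ ⋃ t ∈ S, V t := fun x hx => Set.mem_biUnion hx (htV x hx)
  obtain ⟨b', hb'S, hb'fin, hb'cov⟩ :=
    (hS.isCompact).elim_finite_subcover_image (fun t ht => hVopen t ht) hcover
  refine hb'fin.subset (fun x hx => ?_)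
  obtain ⟨t, ht, hxt⟩ := Set.mem_iUnion₂.mp (hb'cov hx)
  have : x ∈ ({t} : Set K) := hVF t (hb'S ht) ⟨hxt, hSF hx⟩
  rwa [Set.mem_singleton_iff.mp this]

lemma core (n : ℕ) :
    ∀ (F : Set K), IsClosed F → dIter F n = ∅ →
    ∀ (u : Finset ℕ → C(K, ℝ)) (L U : ℝ), 0 < U → U - L < U / 3 ^ n →
    (∀ P Q : Finset ℕ, ‖u P - u Q‖ ≤ U * ((P ∆ Q).card : ℝ)) →
    (∀ P Q : Finset ℕ, P ≠ Q → ∃ t ∈ F, L * ((P ∆ Q).card : ℝ) ≤ |u P t - u Q t|) →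
    False := by
  induction n with
  | zero =>
      intro F _ hF u L U hU hLU _ hlow
      obtain ⟨t, ht, -⟩ := hlow ∅ {0} (Ne.symm (Finset.singleton_ne_empty 0))
      rw [show dIter F 0 = F from rfl] at hF
      rw [hF] at ht
      exact ht
  | succ n ih =>
      intro F hFcl hFe u L U hU hLU hup hlow
      classical
      have h3n : (0:ℝ) < 3 ^ n := by positivity
      have h31 : (3:ℝ) ≤ 3 ^ (n+1) := by
        calc (3:ℝ) = 3^1 := (pow_one 3).symm
        _ ≤ 3^(n+1) := by
            apply pow_le_pow_right₀ (by norm_num : (1:ℝ) ≤ 3)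
            omega
      have hdiv : U / 3 ^ (n+1) ≤ U / 3 :=
        div_le_div_of_nonneg_left hU.le (by norm_num) h31
      have hLbig : 2 * U < 3 * L := by linarith
      by_cases hsplit : ∀ P Q : Finset ℕ, P ≠ Q →
          ∃ t, t ∈ derivedSet F ∧ (3*L - 2*U) * ((P ∆ Q).card : ℝ) ≤ |u P t - u Q t|
      · refine ih (derivedSet F) (isClosed_derivedSet F) ?_ u (3*L - 2*U) U hU ?_ hup ?_
        · rw [← dIter_succ_shift]; exact hFe
        · have h1 : (3:ℝ) * (U / 3 ^ (n+1)) = U / 3 ^ n := by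
            rw [pow_succ]
            field_simp
          have h2 := mul_lt_mul_of_pos_left hLU (by norm_num : (0:ℝ) < 3)
          linarith
        · intro P Q hPQ
          obtain ⟨t, htD, hb⟩ := hsplit P Q hPQ
          exact ⟨t, htD, hb⟩
      · push_neg at hsplit
        obtain ⟨P, Q, hPQ, hbad⟩ := hsplit
        set d : ℕ := (P ∆ Q).card with hd
        have hdpos : 0 < d := by
          rw [hd]
          apply Finset.card_pos.mpr
          rw [Finset.nonempty_iff_ne_empty]
          intro hem
          exact hPQ (symmDiff_eq_bot.mp (by rwa [Finset.bot_eq_empty]))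
        have hdR : (1:ℝ) ≤ (d:ℝ) := by exact_mod_cast hdpos
        set c : ℝ := (3*L - 2*U) * (d:ℝ) with hc
        have hcpos : 0 < c := by
          apply mul_pos (by linarith)
          exact_mod_cast hdpos
        set Sig : Set K := F ∩ {t | c ≤ |u P t - u Q t|} with hSig
        have hcont : Continuous fun t => |u P t - u Q t| :=
          ((u P).continuous.sub (u Q).continuous).abs
        have hSgcl : IsClosed Sig := hFcl.inter (isClosed_le continuous_const hcont)
        have hSgdisj : Sig ∩ derivedSet F = ∅ := by
          ext t
          simp only [Set.mem_inter_iff, Set.mem_empty_iff_false, iff_false, not_and,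
            Set.mem_setOf_eq, hSig]
          rintro ⟨htF, htb⟩ htD
          exact absurd htb (not_le.mpr (hbad t htD))
        have hSigfin : Sig.Finite :=
          finite_of_disjoint_derivedSet hSgcl hSgdisj Set.inter_subset_left
        set Sigf : Finset K := hSigfin.toFinset with hSigf
        -- fresh blocks
        set N0 : ℕ := (P ∪ Q).sup id + 1 with hN0
        set Xb : ℕ → Finset ℕ := fun j => (Finset.range d).image (fun r => N0 + j*d + r) with hXb
        have hXcard : ∀ j, (Xb j).card = d := by
          intro j
          rw [hXb]
          dsimp only
          rw [Finset.card_image_of_injective _ (fun r s h => by omega)]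
          exact Finset.card_range d
        have hXPQ : ∀ j, Disjoint (Xb j) (P ∪ Q) := by
          intro j
          rw [Finset.disjoint_left]
          intro a ha haPQ
          rw [hXb] at ha
          simp only [Finset.mem_image, Finset.mem_range] at ha
          obtain ⟨r, -, hra⟩ := ha
          have h2 : id a ≤ (P ∪ Q).sup id := Finset.le_sup (f := id) haPQ
          simp only [id] at h2
          omega
        have hXX : ∀ j k, j ≠ k → Disjoint (Xb j) (Xb k) := by
          intro j k hjk
          rw [Finset.disjoint_left]
          intro a haj hak
          rw [hXb] at haj hak
          simp only [Finset.mem_image, Finset.mem_range] at haj hak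
          obtain ⟨r, hr, hra⟩ := haj
          obtain ⟨s, hs, hsa⟩ := hak
          exact hjk (block_inj hr hs (by omega))
        have hpt : ∀ (A B : Finset ℕ) (t : K), |u A t - u B t| ≤ U * ((A ∆ B).card : ℝ) := by
          intro A B t
          have h1 : ‖(u A - u B) t‖ ≤ ‖u A - u B‖ := ContinuousMap.norm_coe_le_norm _ t
          rw [ContinuousMap.sub_apply, Real.norm_eq_abs] at h1
          exact h1.trans (hup A B)
        have hXP : ∀ j, Disjoint (Xb j) P := fun j =>
          (Finset.disjoint_union_right.mp (hXPQ j)).1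
        have hXQ : ∀ j, Disjoint (Xb j) Q := fun j =>
          (Finset.disjoint_union_right.mp (hXPQ j)).2
        have hXB : ∀ j, Disjoint (Xb j) (P ∩ Q) := fun j =>
          (hXP j).mono_right Finset.inter_subset_left
        set B : Finset ℕ := P ∩ Q with hB
        have main : ∀ j k : ℕ, j ≠ k → ∃ i : K, i ∈ Sig ∧
            ((c ≤ u (B ∪ Xb j) i - u B i ∧ u (B ∪ Xb k) i - u B i ≤ -c)
             ∨ (c ≤ u (B ∪ Xb k) i - u B i ∧ u (B ∪ Xb j) i - u B i ≤ -c)) := by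
          intro j k hjk
          have c1 : ((P ∪ Xb j) ∆ (Q ∪ Xb k)).card = 3*d := by
            rw [card_symmDiff_union_union (hXPQ j) (hXPQ k) (hXX j k hjk), hXcard, hXcard, ← hd]
            omega
          have hne : (P ∪ Xb j) ≠ (Q ∪ Xb k) := by
            intro he
            have h0 : ((P ∪ Xb j) ∆ (Q ∪ Xb k)).card = 0 := by
              rw [he, symmDiff_self]
              simp
            omega
          obtain ⟨i, hiF, hi⟩ := hlow _ _ hne
          rw [c1] at hi
          push_cast at hi
          have s1 : |u (P ∪ Xb j) i - u P i| ≤ U * (d:ℝ) := by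
            have h := hpt (P ∪ Xb j) P i
            rwa [symmDiff_union_self (hXP j), hXcard] at h
          have s2 : |u (Q ∪ Xb k) i - u Q i| ≤ U * (d:ℝ) := by
            have h := hpt (Q ∪ Xb k) Q i
            rwa [symmDiff_union_self (hXQ k), hXcard] at h
          have tri1 := abs_sub_le (u (P ∪ Xb j) i) (u P i) (u (Q ∪ Xb k) i)
          have tri2 := abs_sub_le (u P i) (u Q i) (u (Q ∪ Xb k) i)
          have hcomm : |u Q i - u (Q ∪ Xb k) i| = |u (Q ∪ Xb k) i - u Q i| := abs_sub_comm _ _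
          have hSigmem : i ∈ Sig := by
            refine ⟨hiF, ?_⟩
            show c ≤ |u P i - u Q i|
            linarith [hc, hi, tri1, tri2, s1, s2, hcomm]
          have sB1 : |u (P ∪ Xb j) i - u (B ∪ Xb j) i| ≤ U * ((P \ Q).card : ℝ) := by
            have h := hpt (P ∪ Xb j) (B ∪ Xb j) i
            rw [hB] at h
            rwa [symmDiff_base_strip (hXPQ j)] at h
          have sB2 : |u (Q ∪ Xb k) i - u (B ∪ Xb k) i| ≤ U * ((Q \ P).card : ℝ) := by
            have h := hpt (Q ∪ Xb k) ((Q ∩ P) ∪ Xb k) i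
            rw [symmDiff_base_strip (by rw [Finset.union_comm Q P]; exact hXPQ k)] at h
            rw [hB, Finset.inter_comm P Q]
            exact h
          have hsplitcard : ((P \ Q).card : ℝ) + ((Q \ P).card : ℝ) = (d:ℝ) := by
            rw [hd]
            exact_mod_cast card_symmDiff_split P Q
          have trB1 := abs_sub_le (u (P ∪ Xb j) i) (u (B ∪ Xb j) i) (u (Q ∪ Xb k) i)
          have trB2 := abs_sub_le (u (B ∪ Xb j) i) (u (B ∪ Xb k) i) (u (Q ∪ Xb k) i)
          have hcomm2 : |u (B ∪ Xb k) i - u (Q ∪ Xb k) i|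
              = |u (Q ∪ Xb k) i - u (B ∪ Xb k) i| := abs_sub_comm _ _
          have hbj : |u (B ∪ Xb j) i - u B i| ≤ U * (d:ℝ) := by
            have h := hpt (B ∪ Xb j) B i
            rwa [symmDiff_union_self (by rw [hB]; exact hXB j), hXcard] at h
          have hbk : |u (B ∪ Xb k) i - u B i| ≤ U * (d:ℝ) := by
            have h := hpt (B ∪ Xb k) B i
            rwa [symmDiff_union_self (by rw [hB]; exact hXB k), hXcard] at h
          have habj := abs_le.mp hbj
          have habk := abs_le.mp hbk
          have hsplU : U * ((P \ Q).card : ℝ) + U * ((Q \ P).card : ℝ) = U * (d:ℝ) := by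
            rw [← mul_add, hsplitcard]
          have hBB : (3*L - U) * (d:ℝ) ≤ |u (B ∪ Xb j) i - u (B ∪ Xb k) i| := by
            linarith [hi, trB1, trB2, hcomm2, sB1, sB2, hsplU]
          refine ⟨i, hSigmem, ?_⟩
          rcases abs_cases (u (B ∪ Xb j) i - u (B ∪ Xb k) i) with ⟨heq, -⟩ | ⟨heq, -⟩
          · left
            rw [heq] at hBB
            constructor
            · linarith [hc, hBB, habk.1, habk.2]
            · linarith [hc, hBB, habj.1, habj.2]
          · right
            rw [heq] at hBB
            constructor
            · linarith [hc, hBB, habj.1, habj.2]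
            · linarith [hc, hBB, habk.1, habk.2]
        have hmemSgf : ∀ {t}, t ∈ Sig → t ∈ Sigf := fun ht => (Set.Finite.mem_toFinset hSigfin).mpr ht
        set φ : ℕ → (↥Sigf → Fin 3) := fun j t =>
          if c ≤ u (B ∪ Xb j) t.val - u B t.val then 2
          else if u (B ∪ Xb j) t.val - u B t.val ≤ -c then 0 else 1 with hφ
        obtain ⟨j, k, hjk, hφeq⟩ := Finite.exists_ne_map_eq_of_infinite φ
        obtain ⟨i, hiSig, hcase⟩ := main j k hjk
        have heval := congrFun hφeq (⟨i, hmemSgf hiSig⟩ : ↥Sigf)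
        rcases hcase with ⟨h1, h2⟩ | ⟨h1, h2⟩
        · have vj : φ j ⟨i, hmemSgf hiSig⟩ = 2 := by
            simp only [hφ]
            rw [if_pos h1]
          have vk : φ k ⟨i, hmemSgf hiSig⟩ = 0 := by
            simp only [hφ]
            rw [if_neg (not_le.mpr (lt_of_le_of_lt h2 (by linarith))), if_pos h2]
          rw [vj, vk] at heval
          exact absurd heval (by decide)
        · have vj : φ j ⟨i, hmemSgf hiSig⟩ = 0 := by
            simp only [hφ]
            rw [if_neg (not_le.mpr (lt_of_le_of_lt h2 (by linarith))), if_pos h2]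
          have vk : φ k ⟨i, hmemSgf hiSig⟩ = 2 := by
            simp only [hφ]
            rw [if_pos h1]
          rw [vj, vk] at heval
          exact absurd heval (by decide)


lemma iterated_eq_dIter {K : Type*} [MetricSpace K] (n : ℕ) :
    iteratedDerivedSet K n = dIter (Set.univ : Set K) n := by
  induction n with
  | zero => rfl
  | succ n ih =>
      show derivedSet _ = derivedSet _
      rw [ih]

end AIUnivAux
end

open AIUnivAux in
/-- If `K` is a compact metric space such that `C(K)` is almost isometrically universal for
separable (real) Banach spaces, then `⋂_n K^(n)` is nonempty. -/
theorem nonempty_iInter_iteratedDerivedSet_of_ai_universal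
    (K : Type*) [MetricSpace K] [CompactSpace K]
    (h : ∀ (X : Type) [NormedAddCommGroup X] [NormedSpace ℝ X]
        [TopologicalSpace.SeparableSpace X] [CompleteSpace X],
      ∀ ε : ℝ, 0 < ε → ∃ f : X → C(K, ℝ),
        ∀ x y : X, ‖x - y‖ ≤ ‖f x - f y‖ ∧ ‖f x - f y‖ ≤ (1 + ε) * ‖x - y‖) :
    (⋂ n : ℕ, iteratedDerivedSet K n).Nonempty := by
  classical
  have hKne : Nonempty K := by
    by_contra hK
    rw [not_nonempty_iff] at hK
    obtain ⟨f, hf⟩ := h ℝ 1 one_pos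
    have hfe : f 0 = f 1 := ContinuousMap.ext (fun t => (hK.elim t))
    have h1 := (hf 0 1).1
    rw [hfe, sub_self, norm_zero] at h1
    norm_num at h1
  have hne : ∀ n, (iteratedDerivedSet K n).Nonempty := by
    intro n
    rw [Set.nonempty_iff_ne_empty]
    intro hemp
    set ε : ℝ := (1/3 : ℝ)^n with hε
    have hεpos : 0 < ε := by positivity
    have h3 : (0:ℝ) < 3^n := by positivity
    obtain ⟨f, hf⟩ := h ℓ₁ ε hεpos
    refine core n Set.univ isClosed_univ ?_ (fun S => f (cube S)) 1 (1+ε)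
      (by positivity) ?_ ?_ ?_
    · rw [← iterated_eq_dIter]
      exact hemp
    · rw [lt_div_iff₀ h3]
      have hε3 : ε * 3^n = 1 := by
        rw [hε, ← mul_pow]
        norm_num
      nlinarith
    · intro P Q
      have h2 := (hf (cube P) (cube Q)).2
      rwa [norm_cube_sub] at h2
    · intro P Q hPQ
      have hlow1 : ((P ∆ Q).card : ℝ) ≤ ‖f (cube P) - f (cube Q)‖ := by
        have h1 := (hf (cube P) (cube Q)).1
        rwa [norm_cube_sub] at h1
      obtain ⟨t, -, ht⟩ := isCompact_univ.exists_isMaxOn Set.univ_nonempty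
        ((f (cube P) - f (cube Q)).continuous.abs.continuousOn)
      have hnorm : ‖f (cube P) - f (cube Q)‖ ≤ |(f (cube P) - f (cube Q)) t| :=
        (ContinuousMap.norm_le _ (abs_nonneg _)).mpr
          (fun s => by simpa [Real.norm_eq_abs] using ht (Set.mem_univ s))
      refine ⟨t, Set.mem_univ t, ?_⟩
      rw [ContinuousMap.sub_apply] at hnorm
      rw [one_mul]
      exact hlow1.trans hnorm
  have hclosed : ∀ n, IsClosed (iteratedDerivedSet K n) := by
    intro n
    cases n with
    | zero => exact isClosed_univ
    | succ n => exact isClosed_derivedSet _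
  have hdec : ∀ n, iteratedDerivedSet K (n+1) ⊆ iteratedDerivedSet K n := by
    intro n
    show derivedSet (iteratedDerivedSet K n) ⊆ iteratedDerivedSet K n
    exact (isClosed_iff_derivedSet_subset _).mp (hclosed n)
  exact IsCompact.nonempty_iInter_of_sequence_nonempty_isCompact_isClosed _ hdec hne
    ((hclosed 0).isCompact) hclosed
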